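/- Let G be a complex matrix with σ₁(G) = σ₂(G) > σ₃(G) (the largest singular value has multiplicity exactly 2). Define ε_t = ‖G^(t)‖_F^{2^{1-t}} / σ₁(G) - 1. Then ε_{t+1}/ε_t → 1/2 as t → ∞, i.e., the convergence is Q-linear with rate 1/2. -/

import Mathlib

open Matrix Filter Topology

noncomputable def frobNorm {m n : Type*} [Fintype m] [Fintype n] (G : Matrix m n ℂ) : ℝ :=
  Real.sqrt (∑ i, ∑ j, ‖G i j‖ ^ 2)

noncomputable def singVals {m n : Type*} [Fintype m] [Fintype n] [DecidableEq n]
    (G : Matrix m n ℂ) : n → ℝ :=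
  fun i => Real.sqrt ((Matrix.isHermitian_conjTranspose_mul_self G).eigenvalues i)

noncomputable def specNorm {m n : Type*} [Fintype m] [Fintype n] [DecidableEq n]
    (G : Matrix m n ℂ) : ℝ :=
  ⨆ i, singVals G i

/-- `gramIter G t` is the Gram iterate `G⁽ᵗ⁺²⁾` of the sequence `G⁽¹⁾ = G`,
`G⁽ᵗ⁺¹⁾ = (G⁽ᵗ⁾)ᴴ G⁽ᵗ⁾`.  (The first iterate `G⁽¹⁾ = G` is kept separate since it has a
different shape.) -/
noncomputable def gramIter {m n : Type*} [Fintype m] [Fintype n] (G : Matrix m n ℂ) :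
    ℕ → Matrix n n ℂ
  | 0 => Gᴴ * G
  | t + 1 => (gramIter G t)ᴴ * gramIter G t

/-- `gramBound G t` is the bound `‖G⁽ᵗ⁺¹⁾‖_F ^ (2^(1-(t+1)))` of the paper (paper index
`t+1 ≥ 1`). -/
noncomputable def gramBound {m n : Type*} [Fintype m] [Fintype n] (G : Matrix m n ℂ) : ℕ → ℝ
  | 0 => frobNorm G
  | t + 1 => frobNorm (gramIter G t) ^ ((2 : ℝ) ^ (-(t + 1 : ℤ)))

lemma conj_pow_eq {n : Type*} [Fintype n] [DecidableEq n] (U D : Matrix n n ℂ)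
    (h1 : star U * U = 1) (h2 : U * star U = 1) (k : ℕ) :
    (U * D * star U) ^ k = U * D ^ k * star U := by
  induction k with
  | zero => simp [h2]
  | succ k ih =>
      rw [pow_succ, ih, pow_succ]
      calc U * D ^ k * star U * (U * D * star U)
          = U * D ^ k * (star U * U) * (D * star U) := by
            simp only [Matrix.mul_assoc]
        _ = U * (D ^ k * D) * star U := by rw [h1]; simp only [Matrix.mul_one,
            Matrix.mul_assoc]

lemma trace_pow_hermitian {n : Type*} [Fintype n] [DecidableEq n] {A : Matrix n n ℂ}
    (hA : A.IsHermitian) (k : ℕ) :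
    (Matrix.trace (A ^ k)).re = ∑ i, hA.eigenvalues i ^ k := by
  conv_lhs => rw [hA.spectral_theorem]
  rw [Unitary.conjStarAlgAut_apply, conj_pow_eq _ _ ((Matrix.mem_unitaryGroup_iff').mp (hA.eigenvectorUnitary).2)
      ((Matrix.mem_unitaryGroup_iff).mp (hA.eigenvectorUnitary).2)]
  rw [Matrix.trace_mul_cycle,
    (Matrix.mem_unitaryGroup_iff').mp (hA.eigenvectorUnitary).2, Matrix.one_mul,
    Matrix.diagonal_pow, Matrix.trace_diagonal]
  rw [Complex.re_sum]
  refine Finset.sum_congr rfl fun i _ => ?_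
  simp [← Complex.ofReal_pow]

lemma sum_sq_norm_eq_re_trace {m n : Type*} [Fintype m] [Fintype n] (B : Matrix m n ℂ) :
    ∑ i, ∑ j, ‖B i j‖ ^ 2 = (Matrix.trace (Bᴴ * B)).re := by
  rw [Matrix.trace, Complex.re_sum]
  rw [Finset.sum_comm]
  refine Finset.sum_congr rfl fun j _ => ?_
  rw [Matrix.diag_apply, Matrix.mul_apply, Complex.re_sum]
  refine Finset.sum_congr rfl fun i _ => ?_
  rw [Matrix.conjTranspose_apply, RCLike.star_def, RCLike.conj_mul]
  simp [← Complex.ofReal_pow]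

lemma gramIter_eq_pow {m n : Type*} [Fintype m] [Fintype n] [DecidableEq n]
    (G : Matrix m n ℂ) (t : ℕ) : gramIter G t = (Gᴴ * G) ^ (2 ^ t) := by
  induction t with
  | zero => simp [gramIter]
  | succ t ih =>
      rw [gramIter, ih, ((Matrix.isHermitian_conjTranspose_mul_self G).pow (2 ^ t)).eq,
        ← pow_add]
      congr 1
      ring

lemma frobNorm_gramIter {m n : Type*} [Fintype m] [Fintype n] [DecidableEq n]
    (G : Matrix m n ℂ) (t : ℕ) :
    frobNorm (gramIter G t) =
      Real.sqrt (∑ i, (Matrix.isHermitian_conjTranspose_mul_self G).eigenvalues i ^ 2 ^ (t + 1)) := by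
  rw [frobNorm, sum_sq_norm_eq_re_trace, gramIter_eq_pow,
    ((Matrix.isHermitian_conjTranspose_mul_self G).pow (2 ^ t)).eq, ← pow_add]
  rw [show 2 ^ t + 2 ^ t = 2 ^ (t + 1) by ring, trace_pow_hermitian]

lemma frobNorm_eq {m n : Type*} [Fintype m] [Fintype n] [DecidableEq n] (G : Matrix m n ℂ) :
    frobNorm G =
      Real.sqrt (∑ i, (Matrix.isHermitian_conjTranspose_mul_self G).eigenvalues i ^ 2 ^ 0) := by
  rw [frobNorm, sum_sq_norm_eq_re_trace]
  conv_lhs => rw [← pow_one (Gᴴ * G)]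
  rw [trace_pow_hermitian (Matrix.isHermitian_conjTranspose_mul_self G)]
  simp

lemma gramBound_eq {m n : Type*} [Fintype m] [Fintype n] [DecidableEq n]
    (G : Matrix m n ℂ) (t : ℕ) :
    gramBound G t =
      (∑ i, (Matrix.isHermitian_conjTranspose_mul_self G).eigenvalues i ^ 2 ^ t) ^
        ((2 : ℝ) ^ (-(t + 1 : ℤ))) := by
  have hS : ∀ k : ℕ, (0:ℝ) ≤ ∑ i, (Matrix.isHermitian_conjTranspose_mul_self G).eigenvalues i ^ k :=
    fun k => Finset.sum_nonneg fun i _ =>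
      pow_nonneg (Matrix.eigenvalues_conjTranspose_mul_self_nonneg G i) k
  cases t with
  | zero =>
      rw [gramBound, frobNorm_eq, Real.sqrt_eq_rpow]
      norm_num
  | succ t =>
      rw [gramBound, frobNorm_gramIter, Real.sqrt_eq_rpow, ← Real.rpow_mul (hS _)]
      congr 1
      rw [show (-(↑(t+1)+1:ℤ)) = (-1) + (-(↑t+1:ℤ)) by push_cast; ring,
        zpow_add₀ (two_ne_zero)]
      norm_num

/-- If `σ₁(G) = σ₂(G) > σ₃(G)` (the largest singular value has multiplicity exactly 2), then
with `ε_t = ‖G⁽ᵗ⁾‖_F^(2^(1-t)) / σ₁(G) - 1` (here at paper index `t+1`, i.e.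
`ε t = gramBound G t / specNorm G - 1`), the quotient `ε_{t+1} / ε_t` tends to `1/2`:
Q-linear convergence of rate `1/2`. -/
theorem gramBound_linear_rate_half {p q : ℕ} (G : Matrix (Fin p) (Fin q) ℂ)
    (σ : Fin q → ℝ) (hanti : Antitone σ)
    (hperm : ∃ e : Equiv.Perm (Fin q), ∀ i, singVals G i = σ (e i))
    (hq : 2 < q) (heq : σ ⟨0, by omega⟩ = σ ⟨1, by omega⟩)
    (hgap : σ ⟨2, hq⟩ < σ ⟨1, by omega⟩) :
    Tendsto (fun t : ℕ =>
        (gramBound G (t + 1) / specNorm G - 1) / (gramBound G t / specNorm G - 1))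
      atTop (𝓝 (1 / 2)) := by
  obtain ⟨e, he⟩ := hperm
  have hq0 : 0 < q := by omega
  have hq1 : 1 < q := by omega
  set j0 : Fin q := ⟨0, hq0⟩
  set j1 : Fin q := ⟨1, hq1⟩
  set j2 : Fin q := ⟨2, hq⟩
  set μ : Fin q → ℝ := (Matrix.isHermitian_conjTranspose_mul_self G).eigenvalues with hμdef
  have hμnn : ∀ i, 0 ≤ μ i := fun i => Matrix.eigenvalues_conjTranspose_mul_self_nonneg G i
  have hμ : ∀ i, μ i = σ (e i) ^ 2 := by
    intro i
    rw [← he i, singVals, Real.sq_sqrt (hμnn i)]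
  have hσnn : ∀ j, 0 ≤ σ j := by
    intro j
    have := he (e.symm j)
    rw [Equiv.apply_symm_apply] at this
    rw [← this]
    exact Real.sqrt_nonneg _
  -- σ₁ and positivity
  have hσ1pos : 0 < σ j0 := heq ▸ lt_of_le_of_lt (hσnn j2) hgap
  -- specNorm = σ j0
  haveI : Nonempty (Fin q) := ⟨j0⟩
  have hspec : specNorm G = σ j0 := by
    refine le_antisymm (ciSup_le fun i => ?_) ?_
    · rw [he i]; exact hanti (by simp [j0, Fin.le_def])
    · have h := le_ciSup (f := fun i => singVals G i)
        (Set.Finite.bddAbove (Set.finite_range _)) (e.symm j0)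
      rwa [he (e.symm j0), Equiv.apply_symm_apply] at h
  -- the normalized singular values
  set r : Fin q → ℝ := fun j => σ j / σ j0 with hrdef
  have hrnn : ∀ j, 0 ≤ r j := fun j => div_nonneg (hσnn j) hσ1pos.le
  have hr0 : r j0 = 1 := div_self hσ1pos.ne'
  have hr1 : r j1 = 1 := by
    rw [hrdef]
    simp only
    rw [← heq]
    exact div_self hσ1pos.ne'
  have hrlt : ∀ j : Fin q, j ≠ j0 → j ≠ j1 → r j < 1 := by
    intro j h0 h1
    have h2 : j2 ≤ j := by
      rw [Fin.le_def]
      rcases Nat.lt_or_ge j.val 2 with h | h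
      · interval_cases hj : j.val
        · exact absurd (Fin.ext hj) h0
        · exact absurd (Fin.ext hj) h1
      · exact h
    have : σ j ≤ σ j2 := hanti h2
    rw [hrdef]
    simp only
    rw [div_lt_one hσ1pos]
    calc σ j ≤ σ j2 := this
      _ < σ j1 := hgap
      _ = σ j0 := heq.symm
  -- sum identity
  set Q : ℕ → ℝ := fun t => ∑ j, r j ^ 2 ^ (t + 1) with hQdef
  have hQge2 : ∀ t, 2 ≤ Q t := by
    intro t
    have hsub : ({j0, j1} : Finset (Fin q)) ⊆ Finset.univ := Finset.subset_univ _
    have hne : j0 ≠ j1 := by simp [j0, j1, Fin.ext_iff]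
    have h := Finset.sum_le_sum_of_subset_of_nonneg hsub
      (fun j _ _ => pow_nonneg (hrnn j) (2 ^ (t + 1)))
    rw [Finset.sum_pair hne, hr0, hr1, one_pow] at h
    rw [hQdef]
    linarith
  have hQpos : ∀ t, 0 < Q t := fun t => lt_of_lt_of_le two_pos (hQge2 t)
  -- gramBound / specNorm = Q t ^ c t
  set c : ℕ → ℝ := fun t => (2 : ℝ) ^ (-(t + 1 : ℤ)) with hcdef
  have hcpos : ∀ t, 0 < c t := fun t => zpow_pos two_pos _
  have hkey : ∀ t, gramBound G t / specNorm G = Q t ^ c t := by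
    intro t
    rw [gramBound_eq, hspec]
    have hsum : ∑ i, μ i ^ 2 ^ t = ∑ j, σ j ^ 2 ^ (t + 1) := by
      calc ∑ i, μ i ^ 2 ^ t = ∑ i, σ (e i) ^ 2 ^ (t + 1) := by
            refine Finset.sum_congr rfl fun i _ => ?_
            rw [hμ i, ← pow_mul, pow_succ, mul_comm (2 ^ t) 2, pow_mul]
        _ = ∑ j, σ j ^ 2 ^ (t + 1) := Equiv.sum_comp e (fun j => σ j ^ 2 ^ (t + 1))
    rw [hsum]
    have hone : ((2 ^ (t + 1) : ℕ) : ℝ) * c t = 1 := by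
      rw [hcdef]
      simp only
      rw [Nat.cast_pow, Nat.cast_ofNat, ← zpow_natCast (2 : ℝ) (t + 1),
        ← zpow_add₀ (by norm_num : (2:ℝ) ≠ 0)]
      rw [show ((t + 1 : ℕ) : ℤ) + -(↑t + 1) = 0 by push_cast; ring, zpow_zero]
    have hσ1N : σ j0 = (σ j0 ^ (2 ^ (t + 1) : ℕ)) ^ c t := by
      rw [← Real.rpow_natCast (σ j0) (2 ^ (t + 1)), ← Real.rpow_mul hσ1pos.le, hone]
      exact (Real.rpow_one _).symm
    conv_lhs => rw [hσ1N]
    rw [← Real.div_rpow (Finset.sum_nonneg fun j _ => pow_nonneg (hσnn j) _)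
      (pow_nonneg hσ1pos.le _)]
    congr 1
    rw [hQdef, Finset.sum_div]
    exact Finset.sum_congr rfl fun j _ => by rw [hrdef, div_pow]
  -- logs
  set L : ℕ → ℝ := fun t => Real.log (Q t) with hLdef
  have hLpos : ∀ t, 0 < L t := fun t => Real.log_pos (by linarith [hQge2 t])
  set x : ℕ → ℝ := fun t => c t * L t with hxdef
  have hxpos : ∀ t, 0 < x t := fun t => mul_pos (hcpos t) (hLpos t)
  have hε : ∀ t, gramBound G t / specNorm G - 1 = Real.exp (x t) - 1 := by
    intro t
    rw [hkey t, Real.rpow_def_of_pos (hQpos t), mul_comm]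
  -- limits
  have hQlim : Tendsto Q atTop (𝓝 2) := by
    have h2 : (2 : ℝ) = ∑ j : Fin q, (if j ∈ ({j0, j1} : Finset (Fin q)) then (1:ℝ) else 0) := by
      rw [Finset.sum_ite_mem, Finset.univ_inter, Finset.sum_const,
        Finset.card_pair (by simp [j0, j1, Fin.ext_iff])]
      norm_num
    rw [hQdef, h2]
    refine tendsto_finset_sum _ fun j _ => ?_
    by_cases hj : j ∈ ({j0, j1} : Finset (Fin q))
    · simp only [hj, if_true]
      have h1 : r j = 1 := by
        rcases Finset.mem_insert.mp hj with h | h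
        · rw [h]; exact hr0
        · rw [Finset.mem_singleton.mp h]; exact hr1
      simp [h1]
    · simp only [hj, if_false]
      have h1 : r j < 1 := by
        rw [Finset.mem_insert, Finset.mem_singleton] at hj
        push_neg at hj
        exact hrlt j hj.1 hj.2
      have hpow : Tendsto (fun n : ℕ => r j ^ n) atTop (𝓝 0) :=
        tendsto_pow_atTop_nhds_zero_of_lt_one (hrnn j) h1
      have hexp : Tendsto (fun t : ℕ => 2 ^ (t + 1)) atTop atTop :=
        (tendsto_pow_atTop_atTop_of_one_lt one_lt_two).comp (tendsto_add_atTop_nat 1)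
      exact hpow.comp hexp
  have hLlim : Tendsto L atTop (𝓝 (Real.log 2)) := hQlim.log two_ne_zero
  have hclim : Tendsto c atTop (𝓝 0) := by
    have hc' : c = fun t : ℕ => ((2 : ℝ)⁻¹) ^ (t + 1) := by
      funext t
      rw [hcdef]
      simp only
      rw [inv_pow, ← zpow_natCast (2:ℝ) (t + 1), ← _root_.zpow_neg]
      norm_cast
    rw [hc']
    exact (tendsto_pow_atTop_nhds_zero_of_lt_one (by norm_num) (by norm_num)).comp
      (tendsto_add_atTop_nat 1)
  have hxlim : Tendsto x atTop (𝓝 0) := by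
    have := hclim.mul hLlim
    rwa [zero_mul] at this
  -- the function (exp y - 1)/y tends to 1
  have hg : Tendsto (fun y : ℝ => (Real.exp y - 1) / y) (𝓝[≠] 0) (𝓝 1) := by
    have h := hasDerivAt_iff_tendsto_slope.mp (Real.hasDerivAt_exp 0)
    rw [Real.exp_zero] at h
    refine h.congr fun y => ?_
    simp [slope_def_field, Real.exp_zero]
  have hxne : ∀ t, x t ≠ 0 := fun t => (hxpos t).ne'
  have hxw : Tendsto x atTop (𝓝[≠] 0) :=
    tendsto_nhdsWithin_iff.mpr ⟨hxlim, Filter.Eventually.of_forall fun t => hxne t⟩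
  have hgx : Tendsto (fun t => (Real.exp (x t) - 1) / x t) atTop (𝓝 1) := hg.comp hxw
  have hgx' : Tendsto (fun t => (Real.exp (x (t + 1)) - 1) / x (t + 1)) atTop (𝓝 1) :=
    hgx.comp (tendsto_add_atTop_nat 1)
  have hLratio : Tendsto (fun t => L (t + 1) / L t) atTop (𝓝 1) := by
    have h := (hLlim.comp (tendsto_add_atTop_nat 1)).div hLlim (Real.log_pos one_lt_two).ne'
    rw [div_self (Real.log_pos one_lt_two).ne'] at h
    exact h.congr fun t => rfl
  have hcr : ∀ t, c (t + 1) / c t = 1 / 2 := by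
    intro t
    rw [hcdef]
    simp only
    rw [← zpow_sub₀ (by norm_num : (2:ℝ) ≠ 0),
      show (-(↑(t + 1) + 1) - -(↑t + 1) : ℤ) = -1 by push_cast; ring]
    norm_num
  have hxratio : Tendsto (fun t => x (t + 1) / x t) atTop (𝓝 (1 / 2)) := by
    have heq' : ∀ t, x (t + 1) / x t = (1 / 2) * (L (t + 1) / L t) := by
      intro t
      rw [hxdef]
      simp only
      rw [mul_div_mul_comm, hcr t]
    have h := (tendsto_const_nhds (x := (1/2:ℝ)) (f := atTop)).mul hLratio
    rw [mul_one] at h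
    exact h.congr fun t => (heq' t).symm
  have hexpne : ∀ t, Real.exp (x t) - 1 ≠ 0 := by
    intro t
    have h1 : (1:ℝ) < Real.exp (x t) := by
      rw [← Real.exp_zero]
      exact Real.exp_lt_exp.mpr (hxpos t)
    linarith
  have key : ∀ a b u v : ℝ, u ≠ 0 → v ≠ 0 → b ≠ 0 →
      (a / u) / (b / v) * (u / v) = a / b := by
    intro a b u v hu hv hb
    field_simp
  have hfinal : ∀ t, ((Real.exp (x (t + 1)) - 1) / x (t + 1)) / ((Real.exp (x t) - 1) / x t)
      * (x (t + 1) / x t) = (Real.exp (x (t + 1)) - 1) / (Real.exp (x t) - 1) :=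
    fun t => key _ _ _ _ (hxne (t + 1)) (hxne t) (hexpne t)
  have htarget : Tendsto (fun t => (Real.exp (x (t + 1)) - 1) / (Real.exp (x t) - 1))
      atTop (𝓝 (1 / 2)) := by
    have h := (hgx'.div hgx one_ne_zero).mul hxratio
    rw [show (1:ℝ)/1 * (1/2) = 1/2 by norm_num] at h
    exact h.congr hfinal
  refine htarget.congr fun t => ?_
  rw [hε t, hε (t + 1)]
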